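/- The Heisenberg-Weyl-parity group HWP(d) is solvable of derived length 3, with derived series HWP(d) ⊵ HW(d) ⊵ {ω(a)·1} ⊵ {1}; moreover HWP(d) is not nilpotent, since [HWP(d), HW(d)] = HW(d). -/

import Mathlib

open Matrix Complex BigOperators Finset Subgroup

noncomputable section

/-- The phase `ω(a) = exp(2πia/d)` for `a : ZMod d`. -/
def ω (d : ℕ) (a : ZMod d) : ℂ := Complex.exp (2 * Real.pi * Complex.I * (a.val : ℂ) / d)

/-- The clock operator `Z`, with `Z|j⟩ = ω(j)|j⟩`. -/
def Zop (d : ℕ) : Matrix (ZMod d) (ZMod d) ℂ := Matrix.diagonal (fun j => ω d j)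

/-- The shift operator `X`, with `X|j⟩ = |j+1⟩`. -/
def Xop (d : ℕ) : Matrix (ZMod d) (ZMod d) ℂ :=
  Matrix.of fun j k => if j = k + 1 then 1 else 0

/-- The finite Fourier transform, with entries `F_{jk} = ω(jk)/√d`. -/
def Fop (d : ℕ) : Matrix (ZMod d) (ZMod d) ℂ :=
  Matrix.of fun j k => ω d (j * k) / Real.sqrt d

/-- `2⁻¹ = (d+1)/2` in `ZMod d` (for odd `d`). -/
def half (d : ℕ) : ZMod d := (((d + 1) / 2 : ℕ) : ZMod d)

/-- The general displacement operator `D(α,β,γ) = ω(γ - 2⁻¹αβ) Z^α X^β`. -/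
def Dop (d : ℕ) [NeZero d] (α β γ : ZMod d) : Matrix (ZMod d) (ZMod d) ℂ :=
  ω d (γ - half d * (α * β)) • (Zop d ^ α.val * Xop d ^ β.val)

/-- The parity operator `P = F²`. -/
def Pop (d : ℕ) [NeZero d] : Matrix (ZMod d) (ZMod d) ℂ := Fop d ^ 2

/-- The displacement-parity operator `𝔇(α,β,γ,ν) = D(α,β,γ) P^ν`. -/
def DPop (d : ℕ) [NeZero d] (α β γ : ZMod d) (ν : ZMod 2) : Matrix (ZMod d) (ZMod d) ℂ :=
  Dop d α β γ * Pop d ^ ν.val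

/-- The sign `(-1)^ν` in `ZMod d`, for `ν : ZMod 2`. -/
def sgn (d : ℕ) (ν : ZMod 2) : ZMod d := (-1 : ZMod d) ^ ν.val

/-- The Heisenberg-Weyl group, as a subgroup of the units of the matrix ring,
generated by (in fact, consisting of) the displacement operators `D(α,β,γ)`. -/
def HW (d : ℕ) [NeZero d] : Subgroup (Matrix (ZMod d) (ZMod d) ℂ)ˣ :=
  Subgroup.closure {u | ∃ α β γ : ZMod d, (u : Matrix (ZMod d) (ZMod d) ℂ) = Dop d α β γ}

/-- The subgroup of phases `ω(a)·1`. -/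
def Phases (d : ℕ) [NeZero d] : Subgroup (Matrix (ZMod d) (ZMod d) ℂ)ˣ :=
  Subgroup.closure {u | ∃ a : ZMod d, (u : Matrix (ZMod d) (ZMod d) ℂ) = ω d a • (1 : Matrix (ZMod d) (ZMod d) ℂ)}

/-- The Heisenberg-Weyl-parity group, as a subgroup of the units of the matrix ring,
generated by (in fact, consisting of) the operators `𝔇(α,β,γ,ν)`. -/
def HWP (d : ℕ) [NeZero d] : Subgroup (Matrix (ZMod d) (ZMod d) ℂ)ˣ :=
  Subgroup.closure {u | ∃ (α β γ : ZMod d) (ν : ZMod 2),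
    (u : Matrix (ZMod d) (ZMod d) ℂ) = DPop d α β γ ν}

/-!
Write `(α,β,γ,ν)` for `𝔇(α,β,γ,ν)`. Since `P = F²` is the reflection `|j⟩ ↦ |-j⟩`, conjugation
by `P` negates displacements, and the operators multiply by an explicit law; so `HWP(d)`, `HW(d)`
and the phases are the images of an abstract group `G` on these labels, of its parity kernel
`ν = 0`, and of its subgroup `{(0,0,γ,0)}`, and every commutator can be computed in `G`.
Because `2` is invertible mod `d`, `⁅P, D(-α/2,-β/2,0)⁆ = D(α,β,0)`, while
`⁅D(a,0,0), D(0,1,0)⁆ = ω(a)`. Hence `⁅G,G⁆ = ⁅G,HW⁆ = HW` and `⁅HW,HW⁆` consists of the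
central phases. As `⁅HWP,HW⁆ = HW ≠ 1`, the lower central series of `HWP(d)` stops at `HW(d)`.
-/

theorem pow_val_add_of_sq_eq_one {M : Type*} [Monoid M] {x : M} (hx : x ^ 2 = 1)
    (ν ν' : ZMod 2) : x ^ (ν + ν').val = x ^ ν.val * x ^ ν'.val := by
  rw [ZMod.val_add, ← pow_eq_pow_mod _ hx, pow_add]

theorem not_isNilpotent_of_le_commutator_top {G : Type*} [Group G] {N : Subgroup G} (hN : N ≠ ⊥)
    (h : N ≤ ⁅N, ⊤⁆) : ¬ Group.IsNilpotent G := by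
  intro hG
  obtain ⟨n, hn⟩ := Subgroup.nilpotent_iff_lowerCentralSeries.mp hG
  have hle : ∀ m, N ≤ (⊤ : Subgroup G).lowerCentralSeries m := by
    intro m
    induction m with
    | zero => exact le_top
    | succ m ih =>
      rw [Subgroup.lowerCentralSeries_succ]
      exact h.trans (commutator_mono ih le_top)
  exact hN (le_bot_iff.mp (hn ▸ hle n))

theorem two_mul_half {d : ℕ} (hodd : Odd d) : 2 * half d = 1 := by
  obtain ⟨k, rfl⟩ := hodd
  rw [half, show (2 * k + 1 + 1) / 2 = k + 1 by omega]
  have : ((2 * k + 1 : ℕ) : ZMod (2 * k + 1)) = 0 := ZMod.natCast_self (2 * k + 1)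
  push_cast at this ⊢
  linear_combination this

@[simp]
theorem sgn_zero {d : ℕ} : sgn d 0 = 1 := pow_zero _

@[simp]
theorem sgn_one {d : ℕ} : sgn d 1 = -1 := pow_one _

theorem sgn_add {d : ℕ} (ν ν' : ZMod 2) : sgn d (ν + ν') = sgn d ν * sgn d ν' :=
  pow_val_add_of_sq_eq_one neg_one_sq ν ν'

theorem sgn_mul_self {d : ℕ} (ν : ZMod 2) : sgn d ν * sgn d ν = 1 := by
  rw [sgn, ← pow_add, ← two_mul, pow_mul, neg_one_sq, one_pow]

namespace HeisenbergWeyl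

variable {d : ℕ}

/-- The matrix `Z^a X^b`. -/
def clockShift (a b : ZMod d) : Matrix (ZMod d) (ZMod d) ℂ :=
  Matrix.of fun j k => if j = k + b then ω d (a * j) else 0

theorem Zop_eq_clockShift : Zop d = clockShift 1 0 := by
  ext j k
  simp [Zop, clockShift, diagonal_apply]

variable [NeZero d]

theorem ω_eq_stdAddChar : ω d = ZMod.stdAddChar := by
  funext a
  rw [ZMod.stdAddChar_apply, ZMod.toCircle_apply]
  rfl

theorem ω_add (a b : ZMod d) : ω d (a + b) = ω d a * ω d b := by
  rw [ω_eq_stdAddChar, AddChar.map_add_eq_mul]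

theorem ω_zero : ω d 0 = 1 := by
  rw [ω_eq_stdAddChar, AddChar.map_zero_eq_one]

theorem ω_ne_one {a : ZMod d} (ha : a ≠ 0) : ω d a ≠ 1 := by
  rwa [← ω_zero (d := d), ω_eq_stdAddChar, ZMod.injective_stdAddChar.ne_iff]

theorem clockShift_mul_clockShift (a b a' b' : ZMod d) :
    clockShift a b * clockShift a' b' = ω d (-(a' * b)) • clockShift (a + a') (b + b') := by
  ext j k
  simp only [clockShift, mul_apply, of_apply, Matrix.smul_apply, smul_eq_mul, ite_mul, zero_mul,
    mul_ite, mul_zero]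
  rw [Finset.sum_eq_single (k + b')]
  · simp only [if_true, add_assoc, add_comm b' b]
    split_ifs with h
    · rw [h, ← ω_add, ← ω_add]
      congr 1
      ring
    · rfl
  · intro l _ hl
    simp [hl]
  · simp

theorem clockShift_zero_zero : clockShift (0 : ZMod d) 0 = 1 := by
  ext j k
  simp [clockShift, one_apply, ω_zero]

theorem Xop_eq_clockShift : Xop d = clockShift 0 1 := by
  ext j k
  simp [Xop, clockShift, ω_zero]

theorem Zop_pow (n : ℕ) : Zop d ^ n = clockShift (n : ZMod d) 0 := by
  induction n with
  | zero => simp [clockShift_zero_zero]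
  | succ n ih =>
    rw [pow_succ, ih, Zop_eq_clockShift, clockShift_mul_clockShift]
    simp [ω_zero]

theorem Xop_pow (n : ℕ) : Xop d ^ n = clockShift 0 (n : ZMod d) := by
  induction n with
  | zero => simp [clockShift_zero_zero]
  | succ n ih =>
    rw [pow_succ, ih, Xop_eq_clockShift, clockShift_mul_clockShift]
    simp [ω_zero]

theorem Dop_eq_smul_clockShift (α β γ : ZMod d) :
    Dop d α β γ = ω d (γ - half d * (α * β)) • clockShift α β := by
  rw [Dop, Zop_pow, Xop_pow, ZMod.natCast_zmod_val, ZMod.natCast_zmod_val,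
    clockShift_mul_clockShift]
  simp [ω_zero]

theorem Dop_mul_Dop (hodd : Odd d) (α β γ α' β' γ' : ZMod d) :
    Dop d α β γ * Dop d α' β' γ' =
      Dop d (α + α') (β + β') (γ + γ' + half d * (α * β' - α' * β)) := by
  simp only [Dop_eq_smul_clockShift, smul_mul_smul, clockShift_mul_clockShift, smul_smul,
    ← ω_add]
  congr 2
  linear_combination α' * β * two_mul_half hodd

theorem Dop_zero_zero (γ : ZMod d) : Dop d 0 0 γ = ω d γ • 1 := by
  simp [Dop_eq_smul_clockShift, clockShift_zero_zero]

theorem DPop_zero (α β γ : ZMod d) : DPop d α β γ 0 = Dop d α β γ := by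
  simp [DPop]

theorem Pop_eq : Pop d = Matrix.of fun j k => if j + k = 0 then 1 else 0 := by
  have hsqrt : (Real.sqrt d : ℂ) * Real.sqrt d = d := by
    rw [← Complex.ofReal_mul, Real.mul_self_sqrt (Nat.cast_nonneg d), Complex.ofReal_natCast]
  ext j k
  have hsum : ∑ l, ω d (l * (j + k)) = if j + k = 0 then (d : ℂ) else 0 := by
    rw [ω_eq_stdAddChar, AddChar.sum_mulShift _ (ZMod.isPrimitive_stdAddChar d), ZMod.card,
      Nat.cast_ite, Nat.cast_zero]
  simp only [Pop, sq, mul_apply, Fop, of_apply, div_mul_div_comm, ← ω_add, hsqrt,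
    ← Finset.sum_div]
  rw [Finset.sum_congr rfl fun l _ => congrArg (ω d) (by ring : j * l + l * k = l * (j + k)),
    hsum]
  split_ifs <;> simp

theorem Pop_sq : Pop d ^ 2 = 1 := by
  ext j k
  simp [sq, Pop_eq, mul_apply, one_apply, add_eq_zero_iff_eq_neg]

theorem Pop_mul_clockShift (a b : ZMod d) :
    Pop d * clockShift a b = clockShift (-a) (-b) * Pop d := by
  ext j k
  simp only [Pop_eq, add_eq_zero_iff_eq_neg, clockShift, mul_apply, of_apply, mul_ite, ite_mul,
    one_mul, zero_mul, mul_zero, sum_ite_eq', mem_univ, ↓reduceIte, neg_add_rev, neg_mul, mul_one]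
  rw [add_comm (-b)]
  split_ifs with h
  · rw [h]
    congr 1
    ring
  · rfl

theorem Pop_mul_Dop (α β γ : ZMod d) : Pop d * Dop d α β γ = Dop d (-α) (-β) γ * Pop d := by
  rw [Dop_eq_smul_clockShift, Dop_eq_smul_clockShift, mul_smul_comm, Pop_mul_clockShift,
    smul_mul_assoc, neg_mul_neg]

theorem Pop_pow_mul_Dop (ν : ZMod 2) (α β γ : ZMod d) :
    Pop d ^ ν.val * Dop d α β γ = Dop d (sgn d ν * α) (sgn d ν * β) γ * Pop d ^ ν.val := by
  obtain h | h : ν.val = 0 ∨ ν.val = 1 := by have := ZMod.val_lt ν; omega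
  all_goals simp [sgn, h, Pop_mul_Dop]

theorem DPop_mul_DPop (hodd : Odd d) (α β γ α' β' γ' : ZMod d) (ν ν' : ZMod 2) :
    DPop d α β γ ν * DPop d α' β' γ' ν' =
      DPop d (α + sgn d ν * α') (β + sgn d ν * β')
        (γ + γ' + half d * (α * (sgn d ν * β') - sgn d ν * α' * β)) (ν + ν') := by
  rw [DPop, DPop, DPop, mul_assoc, ← mul_assoc (Pop d ^ ν.val), Pop_pow_mul_Dop, mul_assoc,
    ← pow_val_add_of_sq_eq_one Pop_sq, ← mul_assoc, Dop_mul_Dop hodd]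

end HeisenbergWeyl

/-- `⟨α, β, γ, ν⟩` stands for `𝔇(α,β,γ,ν)`; the group law below is read off `DPop_mul_DPop`. -/
@[ext]
structure HeisenbergParity (d : ℕ) where
  α : ZMod d
  β : ZMod d
  γ : ZMod d
  ν : ZMod 2

namespace HeisenbergParity

open scoped commutatorElement

variable {d : ℕ}

instance : One (HeisenbergParity d) := ⟨⟨0, 0, 0, 0⟩⟩

instance : Mul (HeisenbergParity d) :=
  ⟨fun x y => ⟨x.α + sgn d x.ν * y.α, x.β + sgn d x.ν * y.β,
    x.γ + y.γ + half d * (x.α * (sgn d x.ν * y.β) - sgn d x.ν * y.α * x.β), x.ν + y.ν⟩⟩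

instance : Inv (HeisenbergParity d) :=
  ⟨fun x => ⟨-(sgn d x.ν * x.α), -(sgn d x.ν * x.β), -x.γ, x.ν⟩⟩

theorem one_def : (1 : HeisenbergParity d) = ⟨0, 0, 0, 0⟩ := rfl

theorem mul_def (x y : HeisenbergParity d) : x * y = ⟨x.α + sgn d x.ν * y.α,
    x.β + sgn d x.ν * y.β,
    x.γ + y.γ + half d * (x.α * (sgn d x.ν * y.β) - sgn d x.ν * y.α * x.β), x.ν + y.ν⟩ := rfl

theorem inv_def (x : HeisenbergParity d) :
    x⁻¹ = ⟨-(sgn d x.ν * x.α), -(sgn d x.ν * x.β), -x.γ, x.ν⟩ := rfl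

instance : Group (HeisenbergParity d) where
  mul_assoc x y z := by
    ext <;> simp only [mul_def, sgn_add]
    · ring
    · ring
    · have hs : sgn d x.ν * sgn d x.ν = 1 := sgn_mul_self x.ν
      linear_combination half d * sgn d y.ν * (y.α * z.β - y.β * z.α) * hs
    · ring
  one_mul x := by ext <;> simp [mul_def, one_def]
  mul_one x := by ext <;> simp [mul_def, one_def]
  inv_mul_cancel x := by
    ext <;> simp only [mul_def, inv_def, one_def]
    · ring
    · ring
    · ring
    · exact CharTwo.add_self_eq_zero x.ν

def parity : HeisenbergParity d →* Multiplicative (ZMod 2) where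
  toFun x := .ofAdd x.ν
  map_one' := rfl
  map_mul' _ _ := rfl

def heisenberg (d : ℕ) : Subgroup (HeisenbergParity d) := parity.ker

theorem mem_heisenberg {x : HeisenbergParity d} : x ∈ heisenberg d ↔ x.ν = 0 :=
  ofAdd_eq_one

def phases (d : ℕ) : Subgroup (HeisenbergParity d) where
  carrier := {x | x.α = 0 ∧ x.β = 0 ∧ x.ν = 0}
  one_mem' := ⟨rfl, rfl, rfl⟩
  mul_mem' := by
    rintro x y ⟨hxα, hxβ, hxν⟩ ⟨hyα, hyβ, hyν⟩
    simp [mul_def, hxα, hxβ, hxν, hyα, hyβ, hyν]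
  inv_mem' := by
    rintro x ⟨hα, hβ, hν⟩
    simp [inv_def, hα, hβ, hν]

theorem mem_phases {x : HeisenbergParity d} : x ∈ phases d ↔ x.α = 0 ∧ x.β = 0 ∧ x.ν = 0 :=
  Iff.rfl

theorem phases_le_heisenberg : phases d ≤ heisenberg d :=
  fun _ hx => mem_heisenberg.2 hx.2.2

theorem commutator_le_heisenberg : commutator (HeisenbergParity d) ≤ heisenberg d :=
  Abelianization.commutator_subset_ker parity

theorem commutator_heisenberg_le_phases : ⁅heisenberg d, heisenberg d⁆ ≤ phases d := by
  rw [commutator_le]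
  intro x hx y hy
  rw [mem_heisenberg] at hx hy
  simp [mem_phases, commutatorElement_def, mul_def, inv_def, hx, hy]

theorem commutator_phases_phases : ⁅phases d, phases d⁆ = ⊥ := by
  rw [eq_bot_iff, commutator_le]
  rintro x ⟨hxα, hxβ, hxν⟩ y ⟨hyα, hyβ, hyν⟩
  rw [mem_bot]
  ext <;> simp [commutatorElement_def, mul_def, inv_def, one_def, hxα, hxβ, hxν, hyα, hyβ, hyν]

theorem phase_eq_commutator (hodd : Odd d) (a : ZMod d) :
    (⟨0, 0, a, 0⟩ : HeisenbergParity d) =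
      ⁅(⟨a, 0, 0, 0⟩ : HeisenbergParity d), ⟨0, 1, 0, 0⟩⁆ := by
  ext <;> simp [commutatorElement_def, mul_def, inv_def]
  linear_combination -a * two_mul_half hodd

theorem displacement_eq_commutator_mul (hodd : Odd d) (α β γ : ZMod d) :
    (⟨α, β, γ, 0⟩ : HeisenbergParity d) =
      ⁅(⟨0, 0, 0, 1⟩ : HeisenbergParity d), ⟨-(half d * α), -(half d * β), 0, 0⟩⁆ *
        ⟨0, 0, γ, 0⟩ := by
  ext <;> simp [commutatorElement_def, mul_def, inv_def, CharTwo.add_self_eq_zero]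
  · linear_combination -α * two_mul_half hodd
  · linear_combination -β * two_mul_half hodd

theorem phases_le_commutator_heisenberg (hodd : Odd d) :
    phases d ≤ ⁅heisenberg d, heisenberg d⁆ := by
  rintro ⟨α, β, γ, ν⟩ ⟨rfl, rfl, rfl⟩
  rw [phase_eq_commutator hodd]
  exact commutator_mem_commutator (mem_heisenberg.2 rfl) (mem_heisenberg.2 rfl)

theorem heisenberg_le_commutator_top (hodd : Odd d) :
    heisenberg d ≤ ⁅(⊤ : Subgroup (HeisenbergParity d)), heisenberg d⁆ := by
  rintro ⟨α, β, γ, ν⟩ (rfl : ν = 0)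
  rw [displacement_eq_commutator_mul hodd]
  refine mul_mem (commutator_mem_commutator trivial (mem_heisenberg.2 rfl)) ?_
  exact commutator_mono le_top le_rfl (phases_le_commutator_heisenberg hodd ⟨rfl, rfl, rfl⟩)

theorem commutator_top_heisenberg (hodd : Odd d) :
    ⁅(⊤ : Subgroup (HeisenbergParity d)), heisenberg d⁆ = heisenberg d :=
  le_antisymm ((commutator_mono le_rfl le_top).trans commutator_le_heisenberg)
    (heisenberg_le_commutator_top hodd)

theorem commutator_top_top (hodd : Odd d) :
    ⁅(⊤ : Subgroup (HeisenbergParity d)), ⊤⁆ = heisenberg d :=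
  le_antisymm commutator_le_heisenberg
    ((heisenberg_le_commutator_top hodd).trans (commutator_mono le_rfl le_top))

theorem commutator_heisenberg_heisenberg (hodd : Odd d) :
    ⁅heisenberg d, heisenberg d⁆ = phases d :=
  le_antisymm commutator_heisenberg_le_phases (phases_le_commutator_heisenberg hodd)

theorem derivedSeries_two (hodd : Odd d) : derivedSeries (HeisenbergParity d) 2 = phases d := by
  rw [derivedSeries_succ, derivedSeries_one, commutator_def, commutator_top_top hodd,
    commutator_heisenberg_heisenberg hodd]

theorem derivedSeries_three (hodd : Odd d) : derivedSeries (HeisenbergParity d) 3 = ⊥ := by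
  rw [derivedSeries_succ, derivedSeries_two hodd, commutator_phases_phases]

section Representation

open HeisenbergWeyl

variable [NeZero d]

def rep (hodd : Odd d) : HeisenbergParity d →* (Matrix (ZMod d) (ZMod d) ℂ)ˣ :=
  MonoidHom.toHomUnits
    { toFun x := DPop d x.α x.β x.γ x.ν
      map_one' := by simp [one_def, DPop, Dop_zero_zero, ω_zero]
      map_mul' _ _ := (DPop_mul_DPop hodd ..).symm }

theorem coe_rep (hodd : Odd d) (x : HeisenbergParity d) :
    (rep hodd x : Matrix (ZMod d) (ZMod d) ℂ) = DPop d x.α x.β x.γ x.ν :=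
  rfl

theorem coe_rep_phase (hodd : Odd d) (a : ZMod d) :
    (rep hodd ⟨0, 0, a, 0⟩ : Matrix (ZMod d) (ZMod d) ℂ) = ω d a • 1 := by
  rw [coe_rep, DPop_zero, Dop_zero_zero]

theorem HWP_eq_map (hodd : Odd d) :
    HWP d = (⊤ : Subgroup (HeisenbergParity d)).map (rep hodd) := by
  rw [HWP, ← closure_eq ⊤, MonoidHom.map_closure, coe_top, Set.image_univ]
  congr 1
  ext u
  constructor
  · rintro ⟨α, β, γ, ν, hu⟩
    exact ⟨⟨α, β, γ, ν⟩, Units.ext hu.symm⟩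
  · rintro ⟨x, rfl⟩
    exact ⟨x.α, x.β, x.γ, x.ν, rfl⟩

theorem HW_eq_map (hodd : Odd d) : HW d = (heisenberg d).map (rep hodd) := by
  rw [HW, ← closure_eq (heisenberg d), MonoidHom.map_closure]
  congr 1
  ext u
  constructor
  · rintro ⟨α, β, γ, hu⟩
    exact ⟨⟨α, β, γ, 0⟩, mem_heisenberg.2 rfl, Units.ext (hu.trans (DPop_zero α β γ).symm).symm⟩
  · rintro ⟨x, hx, rfl⟩
    exact ⟨x.α, x.β, x.γ, by rw [coe_rep, mem_heisenberg.1 hx, DPop_zero]⟩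

theorem Phases_eq_map (hodd : Odd d) : Phases d = (phases d).map (rep hodd) := by
  rw [Phases, ← closure_eq (phases d), MonoidHom.map_closure]
  congr 1
  ext u
  constructor
  · rintro ⟨a, hu⟩
    exact ⟨⟨0, 0, a, 0⟩, ⟨rfl, rfl, rfl⟩, Units.ext (by rw [hu, coe_rep_phase])⟩
  · rintro ⟨⟨α, β, γ, ν⟩, ⟨rfl, rfl, rfl⟩, rfl⟩
    exact ⟨γ, coe_rep_phase hodd γ⟩

theorem phases_not_le_ker (hodd : Odd d) (hd : 1 < d) : ¬ phases d ≤ (rep hodd).ker := by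
  intro h
  have hker := h (show (⟨0, 0, 1, 0⟩ : HeisenbergParity d) ∈ phases d from ⟨rfl, rfl, rfl⟩)
  rw [MonoidHom.mem_ker, Units.ext_iff, coe_rep_phase, Units.val_one] at hker
  have : Fact (1 < d) := ⟨hd⟩
  exact ω_ne_one one_ne_zero (by simpa using congrFun₂ hker 0 0)

def toHWP (hodd : Odd d) : HeisenbergParity d →* HWP d :=
  (rep hodd).codRestrict (HWP d) fun _ => HWP_eq_map hodd ▸ mem_map_of_mem _ trivial

theorem toHWP_surjective (hodd : Odd d) : Function.Surjective (toHWP hodd) := by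
  rintro ⟨u, hu⟩
  rw [HWP_eq_map hodd] at hu
  obtain ⟨x, -, rfl⟩ := hu
  exact ⟨x, rfl⟩

theorem ker_toHWP (hodd : Odd d) : (toHWP hodd).ker = (rep hodd).ker :=
  MonoidHom.ker_codRestrict _ _ _

theorem derivedSeries_HWP (hodd : Odd d) (n : ℕ) :
    derivedSeries (HWP d) n = (derivedSeries (HeisenbergParity d) n).map (toHWP hodd) :=
  (map_derivedSeries_eq (toHWP_surjective hodd) n).symm

end Representation

end HeisenbergParity

open HeisenbergParity

/-- `HWP(d)` is solvable of derived length 3, with derived series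
`HWP(d) ⊵ HW(d) ⊵ {ω(a)·1} ⊵ {1}`; moreover `HWP(d)` is not nilpotent,
since `⁅HWP(d), HW(d)⁆ = HW(d)`. -/
theorem HWP_solvable_not_nilpotent (d : ℕ) [NeZero d] (hodd : Odd d) (hd : 3 ≤ d) :
    IsSolvable ↥(HWP d) ∧
    derivedSeries ↥(HWP d) 3 = ⊥ ∧
    derivedSeries ↥(HWP d) 2 ≠ ⊥ ∧
    ⁅HWP d, HWP d⁆ = HW d ∧
    ⁅HW d, HW d⁆ = Phases d ∧
    ⁅Phases d, Phases d⁆ = (⊥ : Subgroup (Matrix (ZMod d) (ZMod d) ℂ)ˣ) ∧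
    ¬ Group.IsNilpotent ↥(HWP d) ∧
    ⁅HWP d, HW d⁆ = HW d := by
  have hker : ¬ phases d ≤ (toHWP hodd).ker := by
    rw [ker_toHWP]
    exact phases_not_le_ker hodd (by omega)
  have h3 : derivedSeries (HWP d) 3 = ⊥ := by
    rw [derivedSeries_HWP hodd, derivedSeries_three hodd, Subgroup.map_bot]
  refine ⟨(Group.isSolvable_def _).2 ⟨3, h3⟩, h3, ?_, ?_, ?_, ?_, ?_, ?_⟩
  · rw [derivedSeries_HWP hodd, derivedSeries_two hodd, Ne, Subgroup.map_eq_bot_iff]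
    exact hker
  · rw [HWP_eq_map hodd, HW_eq_map hodd, ← map_commutator, commutator_top_top hodd]
  · rw [HW_eq_map hodd, Phases_eq_map hodd, ← map_commutator,
      commutator_heisenberg_heisenberg hodd]
  · rw [Phases_eq_map hodd, ← map_commutator, commutator_phases_phases, Subgroup.map_bot]
  · refine not_isNilpotent_of_le_commutator_top (N := (heisenberg d).map (toHWP hodd)) ?_ ?_
    · rw [Ne, Subgroup.map_eq_bot_iff]
      exact fun h => hker (phases_le_heisenberg.trans h)
    · rw [← map_top_of_surjective _ (toHWP_surjective hodd), ← map_commutator, commutator_comm,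
        commutator_top_heisenberg hodd]
  · rw [HWP_eq_map hodd, HW_eq_map hodd, ← map_commutator, commutator_top_heisenberg hodd]
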